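/- Let G be a finite simple connected graph with A(G) ≠ ∅ and md(G*) = k ≥ 2, and let N₁ ∪ N₂ ∪ ⋯ ∪ N_k be an optimal matching D*-cover of G*, where each N_i is a matching of G*. Then G has an optimal matching cover M₁ ∪ M₂ ∪ ⋯ ∪ M_k (each M_i a matching of G) such that M₁ is a maximum matching of G with V(N₁) ⊆ V(M₁), M₂ is the union of N₂ and a matching of the induced subgraph G[D(G)], and M_i = N_i for all 3 ≤ i ≤ k. -/

import Mathlib

variable {V : Type*}

/-- The set of vertices covered by a set of edges. -/
def edgeCover (M : Finset (Sym2 V)) : Set V := {v | ∃ e ∈ M, v ∈ e}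

/-- `M` is a matching of `G`: a set of pairwise disjoint edges of `G`. -/
def IsMatchingSet (G : SimpleGraph V) (M : Finset (Sym2 V)) : Prop :=
  (∀ e ∈ M, e ∈ G.edgeSet) ∧
    ∀ e ∈ M, ∀ f ∈ M, e ≠ f → ∀ v : V, v ∈ e → v ∉ f

/-- `M` is a maximum matching of `G`. -/
def IsMaximumMatchingSet (G : SimpleGraph V) (M : Finset (Sym2 V)) : Prop :=
  IsMatchingSet G M ∧ ∀ N : Finset (Sym2 V), IsMatchingSet G N → N.card ≤ M.card

variable [Fintype V] [DecidableEq V]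

/-- `M` is a `k`-matching cover of `G`: a union of `k` matchings of `G` covering `V(G)`. -/
def IsKMatchingCover (G : SimpleGraph V) (k : ℕ) (M : Finset (Sym2 V)) : Prop :=
  (∃ f : Fin k → Finset (Sym2 V), (∀ i, IsMatchingSet G (f i)) ∧
      M = Finset.univ.biUnion f) ∧
    ∀ v : V, v ∈ edgeCover M

/-- The matching cover number `mc(G)`. -/
noncomputable def mc (G : SimpleGraph V) : ℕ :=
  sInf {k | ∃ M : Finset (Sym2 V), IsKMatchingCover G k M}

/-- `M` is a `k`-matching `D`-cover of `G`: a union of `k` matchings of `G` covering `D`. -/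
def IsKMatchingDCover (G : SimpleGraph V) (D : Set V) (k : ℕ)
    (M : Finset (Sym2 V)) : Prop :=
  (∃ f : Fin k → Finset (Sym2 V), (∀ i, IsMatchingSet G (f i)) ∧
      M = Finset.univ.biUnion f) ∧
    ∀ v ∈ D, v ∈ edgeCover M

/-- The matching `D`-cover number `md(G)`. -/
noncomputable def md (G : SimpleGraph V) (D : Set V) : ℕ :=
  sInf {k | ∃ M : Finset (Sym2 V), IsKMatchingDCover G D k M}

/-- The Gallai–Edmonds set `D(G)`: vertices missed by some maximum matching. -/
def Dset (G : SimpleGraph V) : Set V :=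
  {v | ∃ M : Finset (Sym2 V), IsMaximumMatchingSet G M ∧ v ∉ edgeCover M}

/-- The Gallai–Edmonds set `A(G) = N_G(D(G))`. -/
def Aset (G : SimpleGraph V) : Set V :=
  {v | v ∉ Dset G ∧ ∃ u ∈ Dset G, G.Adj u v}

/-- The Gallai–Edmonds set `C(G) = V(G) \ (A(G) ∪ D(G))`. -/
def Cset (G : SimpleGraph V) : Set V :=
  {v | v ∉ Dset G ∧ v ∉ Aset G}

/-- The induced subgraph `G[s]`, viewed as a graph on the same vertex type. -/
def indOn (G : SimpleGraph V) (s : Set V) : SimpleGraph V where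
  Adj a b := a ∈ s ∧ b ∈ s ∧ G.Adj a b
  symm := ⟨by rintro a b ⟨ha, hb, h⟩; exact ⟨hb, ha, h.symm⟩⟩
  loopless := ⟨by rintro a ⟨-, -, h⟩; exact G.ne_of_adj h rfl⟩

/-- `D*`: the set of isolated vertices of `G[D(G)]`. -/
def DstarSet (G : SimpleGraph V) : Set V :=
  {v | v ∈ Dset G ∧ ∀ u : V, ¬ (indOn G (Dset G)).Adj v u}

/-- The bipartite graph `G*`, obtained from `G` by deleting the nontrivial components of
`G[D(G)]`, the vertices of `C(G)`, and the edges spanned by `A(G)`: its edges are exactly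
the edges of `G` joining `A(G)` and `D*`. -/
def Gstar (G : SimpleGraph V) : SimpleGraph V where
  Adj a b := G.Adj a b ∧
    ((a ∈ Aset G ∧ b ∈ DstarSet G) ∨ (a ∈ DstarSet G ∧ b ∈ Aset G))
  symm := ⟨by rintro a b ⟨h, hc⟩; exact ⟨h.symm, by tauto⟩⟩
  loopless := ⟨by rintro a ⟨h, -⟩; exact G.ne_of_adj h rfl⟩

open Classical in
/-- The degree of `v` in the edge set `M`; this is the degree of `v` in `G[M]+A`
(vertices not covered by `M` have degree `0`). -/
noncomputable def degM (M : Finset (Sym2 V)) (v : V) : ℕ :=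
  (M.filter fun e => v ∈ e).card

/-- The maximum degree `Δ(G[M]+A)`. -/
noncomputable def maxDegPlus (M : Finset (Sym2 V)) : ℕ :=
  Finset.univ.sup fun v : V => degM M v

/-- `w` is a maximum center of `M` (all vertices of `A` being regarded as centers). -/
def IsMaximumCenter (A : Set V) (M : Finset (Sym2 V)) (w : V) : Prop :=
  w ∈ A ∧ degM M w = maxDegPlus M

/-- `(A, D)` is a bipartition of `G`. -/
def IsBipartition (G : SimpleGraph V) (A D : Set V) : Prop :=
  Disjoint A D ∧ A ∪ D = Set.univ ∧
    ∀ a b : V, G.Adj a b → (a ∈ A ∧ b ∈ D) ∨ (a ∈ D ∧ b ∈ A)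

/-- A matching `D`-cover of `G`, recorded as an edge set
(a union of matchings of `G` covering `D`). -/
def IsMDCoverSet (G : SimpleGraph V) (D : Set V) (M : Finset (Sym2 V)) : Prop :=
  ∃ k, IsKMatchingDCover G D k M

/-- A minimal matching `D`-cover: no proper subset is a matching `D`-cover. -/
def IsMinimalMDCover (G : SimpleGraph V) (D : Set V) (M : Finset (Sym2 V)) : Prop :=
  IsMDCoverSet G D M ∧ ∀ M' ⊂ M, ¬ IsMDCoverSet G D M'

/-- The graph `G[M]` spanned by an edge set, on the same vertex type. -/
def fromEdges (M : Finset (Sym2 V)) : SimpleGraph V where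
  Adj a b := a ≠ b ∧ s(a, b) ∈ M
  symm := ⟨by rintro a b ⟨hne, h⟩; exact ⟨hne.symm, by rwa [Sym2.eq_swap]⟩⟩
  loopless := ⟨by rintro a ⟨hne, -⟩; exact hne rfl⟩

/-- The connected component of `v` in `G[M]` is a star with center `c`:
every vertex of the component is `c` or a neighbour of `c`, and every edge of the
component is incident with `c`. -/
def StarCenteredAt (M : Finset (Sym2 V)) (c v : V) : Prop :=
  (fromEdges M).Reachable c v ∧
    (∀ u : V, (fromEdges M).Reachable u v → u = c ∨ (fromEdges M).Adj c u) ∧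
    ∀ e ∈ M, (∃ x, x ∈ e ∧ (fromEdges M).Reachable x v) → c ∈ e

/-- Every component of `G[M]` is a star whose center lies in `A`. -/
def CentersInA (A : Set V) (M : Finset (Sym2 V)) : Prop :=
  ∀ v ∈ edgeCover M, ∃ c ∈ A, StarCenteredAt M c v

/-- `w` is an `M`-switching path: an `M`-alternating path (starting at a maximum center
with an edge of `M`, vertices alternately centers in `A` and ends, edges alternately in
`M` and outside `M`) ending at a center `v` with `d(u) ≥ d(v) + 2`. -/
def IsSwitchingPath (G : SimpleGraph V) (A : Set V) (M : Finset (Sym2 V))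
    (n : ℕ) (w : Fin (n + 1) → V) : Prop :=
  0 < n ∧ Function.Injective w ∧
    (∀ i : Fin n, G.Adj (w i.castSucc) (w i.succ)) ∧
    (∀ i : Fin n, (s(w i.castSucc, w i.succ) ∈ M ↔ Even (i : ℕ))) ∧
    (∀ i : Fin (n + 1), w i ∈ A ↔ Even (i : ℕ)) ∧
    w (Fin.last n) ∈ A ∧
    IsMaximumCenter A M (w 0) ∧
    degM M (w (Fin.last n)) + 2 ≤ degM M (w 0)

/-- There is an `M`-switching path from `u` to `v` in `G`. -/
def ExistsSwitchingPath (G : SimpleGraph V) (A : Set V) (M : Finset (Sym2 V))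
    (u v : V) : Prop :=
  ∃ (n : ℕ) (w : Fin (n + 1) → V),
    IsSwitchingPath G A M n w ∧ w 0 = u ∧ w (Fin.last n) = v

/-- The edge set of the path `w 0, w 1, …, w n`. -/
def pathEdges (n : ℕ) (w : Fin (n + 1) → V) : Finset (Sym2 V) :=
  Finset.univ.image fun i : Fin n => s(w i.castSucc, w i.succ)

set_option linter.unusedSectionVars false

section Helpers

variable {G : SimpleGraph V}

lemma mem_edgeCover {M : Finset (Sym2 V)} {v : V} :
    v ∈ edgeCover M ↔ ∃ e ∈ M, v ∈ e := Iff.rfl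

lemma edgeCover_mono {M M' : Finset (Sym2 V)} (h : M ⊆ M') :
    edgeCover M ⊆ edgeCover M' := by
  rintro v ⟨e, he, hv⟩; exact ⟨e, h he, hv⟩

lemma matching_subset {M M' : Finset (Sym2 V)} (h : M' ⊆ M)
    (hM : IsMatchingSet G M) : IsMatchingSet G M' :=
  ⟨fun e he => hM.1 e (h he), fun e he f hf hef v hv => hM.2 e (h he) f (h hf) hef v hv⟩

lemma matching_edge_unique {M : Finset (Sym2 V)} (hM : IsMatchingSet G M)
    {e f : Sym2 V} (he : e ∈ M) (hf : f ∈ M) {v : V} (hv : v ∈ e) (hv' : v ∈ f) :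
    e = f := by
  by_contra h
  exact hM.2 e he f hf h v hv hv'

lemma exists_eq_pair {e : Sym2 V} (he : e ∈ G.edgeSet) {v : V} (hv : v ∈ e) :
    ∃ x, e = s(v, x) ∧ G.Adj v x := by
  induction e using Sym2.ind with
  | _ a b =>
    rw [SimpleGraph.mem_edgeSet] at he
    rcases Sym2.mem_iff.1 hv with rfl | rfl
    · exact ⟨b, rfl, he⟩
    · exact ⟨a, Sym2.eq_swap, he.symm⟩

lemma matching_empty : IsMatchingSet G (∅ : Finset (Sym2 V)) := by
  constructor <;> simp

lemma exists_maximum_matching (G : SimpleGraph V) :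
    ∃ M, IsMaximumMatchingSet G M := by
  classical
  obtain ⟨M, hM, hmax⟩ := Finset.exists_max_image
    (Finset.univ.filter fun M => IsMatchingSet G M) Finset.card
    ⟨∅, by simp [matching_empty]⟩
  refine ⟨M, (Finset.mem_filter.1 hM).2, fun N hN => hmax N (by simp [hN])⟩

/-- No augmenting edge: two exposed vertices are not adjacent. -/
lemma not_adj_of_exposed {M : Finset (Sym2 V)} (hM : IsMaximumMatchingSet G M)
    {a b : V} (ha : a ∉ edgeCover M) (hb : b ∉ edgeCover M) (hab : G.Adj a b) :
    False := by
  have hab' : s(a, b) ∉ M := fun h => ha ⟨_, h, by simp⟩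
  have hdisj : ∀ g ∈ M, ∀ v : V, v ∈ s(a, b) → v ∉ g := by
    intro g hg v hv hvg
    rcases Sym2.mem_iff.1 hv with rfl | rfl
    · exact ha ⟨g, hg, hvg⟩
    · exact hb ⟨g, hg, hvg⟩
  have hm : IsMatchingSet G (insert s(a, b) M) := by
    constructor
    · intro e he
      rcases Finset.mem_insert.1 he with rfl | he
      · exact hab
      · exact hM.1.1 e he
    · intro e he f hf hef v hv hv'
      rcases Finset.mem_insert.1 he with rfl | he
      · rcases Finset.mem_insert.1 hf with rfl | hf
        · exact hef rfl
        · exact hdisj f hf v hv hv'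
      · rcases Finset.mem_insert.1 hf with rfl | hf
        · exact hdisj e he v hv' hv
        · exact hM.1.2 e he f hf hef v hv hv'
  have := hM.2 _ hm
  rw [Finset.card_insert_of_notMem hab'] at this
  omega

lemma cover_erase {M : Finset (Sym2 V)} (hM : IsMatchingSet G M) {f : Sym2 V}
    (hf : f ∈ M) : edgeCover (M.erase f) = edgeCover M \ {v | v ∈ f} := by
  ext u
  constructor
  · rintro ⟨e, he, hu⟩
    have heM := Finset.mem_of_mem_erase he
    have hne := Finset.ne_of_mem_erase he
    exact ⟨⟨e, heM, hu⟩, fun huf => hne (matching_edge_unique hM heM hf hu huf)⟩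
  · rintro ⟨⟨e, he, hu⟩, huf⟩
    refine ⟨e, Finset.mem_erase.2 ⟨?_, he⟩, hu⟩
    rintro rfl; exact huf hu

lemma cover_insert {M : Finset (Sym2 V)} {e : Sym2 V} :
    edgeCover (insert e M) = edgeCover M ∪ {v | v ∈ e} := by
  ext u
  simp only [edgeCover, Set.mem_setOf_eq, Set.mem_union, Finset.mem_insert]
  constructor
  · rintro ⟨g, (rfl | hg), hu⟩
    · exact Or.inr hu
    · exact Or.inl ⟨g, hg, hu⟩
  · rintro (⟨g, hg, hu⟩ | hu)
    · exact ⟨g, Or.inr hg, hu⟩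
    · exact ⟨e, Or.inl rfl, hu⟩

/-- Swap one edge of a matching for a new edge. -/
lemma swap_matching {M : Finset (Sym2 V)} (hM : IsMatchingSet G M) {f e : Sym2 V}
    (hf : f ∈ M) (he : e ∈ G.edgeSet) (heM : e ∉ M)
    (hcov : ∀ u, u ∈ e → u ∈ edgeCover M → u ∈ f) :
    IsMatchingSet G (insert e (M.erase f)) ∧
      (insert e (M.erase f)).card = M.card ∧
      edgeCover (insert e (M.erase f)) =
        (edgeCover M \ {v | v ∈ f}) ∪ {v | v ∈ e} := by
  have hee : e ∉ M.erase f := fun h => heM (Finset.mem_of_mem_erase h)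
  have hcov' : ∀ u, u ∈ e → u ∉ edgeCover (M.erase f) := by
    intro u hu hu'
    rw [cover_erase hM hf] at hu'
    exact hu'.2 (hcov u hu hu'.1)
  refine ⟨⟨?_, ?_⟩, ?_, ?_⟩
  · intro g hg
    rcases Finset.mem_insert.1 hg with rfl | hg
    · exact he
    · exact hM.1 g (Finset.mem_of_mem_erase hg)
  · intro g hg h hh hgh v hv hv'
    rcases Finset.mem_insert.1 hh with hhe | hh'
    · rcases Finset.mem_insert.1 hg with hge | hg'
      · exact hgh (hge.trans hhe.symm)
      · exact hcov' v (hhe ▸ hv') ⟨g, hg', hv⟩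
    · rcases Finset.mem_insert.1 hg with hge | hg'
      · exact hcov' v (hge ▸ hv) ⟨h, hh', hv'⟩
      · exact hM.2 g (Finset.mem_of_mem_erase hg') h (Finset.mem_of_mem_erase hh') hgh v hv hv'
  · rw [Finset.card_insert_of_notMem hee, Finset.card_erase_of_mem hf]
    have : 0 < M.card := Finset.card_pos.2 ⟨f, hf⟩
    omega
  · rw [cover_insert, cover_erase hM hf]

end Helpers
section Flip

variable {G : SimpleGraph V}

/-- Alternating-path exchange: if `v` is exposed by a maximum matching `M` but covered by a
matching `P`, then there is a maximum matching covering `v` and everything `M` covered,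
except one vertex `b` outside the cover of `P`.  `S` is a set of edges of `M`, disjoint from
the cover of `P`, that must be preserved. -/
lemma flipA : ∀ (P : Finset (Sym2 V)), ∀ (M : Finset (Sym2 V)) (v : V) (S : Finset (Sym2 V)),
    IsMaximumMatchingSet G M → IsMatchingSet G P → v ∉ edgeCover M → v ∈ edgeCover P →
    S ⊆ M → (∀ g ∈ S, ∀ u : V, u ∈ g → u ∉ edgeCover P) →
    ∃ (M₂ : Finset (Sym2 V)) (b : V), IsMaximumMatchingSet G M₂ ∧ M₂.card = M.card ∧
      b ∈ edgeCover M ∧ b ∉ edgeCover P ∧ b ∉ edgeCover M₂ ∧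
      edgeCover M₂ = (edgeCover M ∪ {v}) \ {b} ∧ S ⊆ M₂ := by
  intro P
  induction P using Finset.strongInduction with
  | _ P IH =>
    intro M v S hM hP hvM hvP hSM hSP
    obtain ⟨e, heP, hve⟩ := hvP
    obtain ⟨x, rfl, hvx⟩ := exists_eq_pair (hP.1 e heP) hve
    have hxM : x ∈ edgeCover M := by
      by_contra hx
      exact not_adj_of_exposed hM hvM hx hvx
    obtain ⟨f, hfM, hxf⟩ := hxM
    obtain ⟨y, rfl, hxy⟩ := exists_eq_pair (hM.1.1 f hfM) hxf
    have hyM : y ∈ edgeCover M := ⟨_, hfM, Sym2.mem_mk_right x y⟩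
    have hxcM : x ∈ edgeCover M := ⟨_, hfM, Sym2.mem_mk_left x y⟩
    have hyv : y ≠ v := fun h => hvM (h ▸ hyM)
    have hxv : x ≠ v := fun h => hvM (h ▸ hxcM)
    have hxy' : x ≠ y := hxy.ne
    have heM : s(v, x) ∉ M := fun h => hvM ⟨_, h, Sym2.mem_mk_left v x⟩
    have hfP : s(x, y) ∉ P := by
      intro h
      have := matching_edge_unique hP heP h (Sym2.mem_mk_right v x) (Sym2.mem_mk_left x y)
      -- s(v,x) = s(x,y) forces v = y or so; derive contradiction
      rw [Sym2.eq_iff] at this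
      rcases this with ⟨hv1, _⟩ | ⟨hv1, _⟩
      · exact hxv hv1.symm
      · exact hyv hv1.symm
    -- the swapped matching
    have hcov : ∀ u : V, u ∈ s(v, x) → u ∈ edgeCover M → u ∈ s(x, y) := by
      intro u hu huM
      rcases Sym2.mem_iff.1 hu with h | h
      · rw [h] at huM; exact absurd huM hvM
      · rw [h]; exact Sym2.mem_mk_left x y
    obtain ⟨hM'm, hM'card, hM'cov⟩ := swap_matching hM.1 hfM (hvx : G.Adj v x) heM hcov
    set M' : Finset (Sym2 V) := insert s(v, x) (M.erase s(x, y)) with hM'def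
    have hM'max : IsMaximumMatchingSet G M' := ⟨hM'm, fun N hN => hM'card ▸ hM.2 N hN⟩
    have hSf : s(x, y) ∉ S := by
      intro h
      exact hSP _ h x (Sym2.mem_mk_left x y) ⟨_, heP, Sym2.mem_mk_right v x⟩
    have hSM' : S ⊆ M' := by
      intro g hg
      exact Finset.mem_insert_of_mem (Finset.mem_erase.2 ⟨fun h => hSf (h ▸ hg), hSM hg⟩)
    have hcovM' : edgeCover M' = (edgeCover M ∪ {v}) \ {y} := by
      rw [hM'cov]
      ext u
      simp only [Set.mem_union, Set.mem_diff, Set.mem_setOf_eq, Set.mem_singleton_iff,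
        Sym2.mem_iff]
      constructor
      · rintro (⟨huM, hnf⟩ | (rfl | rfl))
        · exact ⟨Or.inl huM, fun h => hnf (Or.inr h)⟩
        · exact ⟨Or.inr rfl, hyv.symm⟩
        · exact ⟨Or.inl hxcM, hxy'⟩
      · rintro ⟨(huM | rfl), hny⟩
        · by_cases hux : u = x
          · exact Or.inr (Or.inr hux)
          · exact Or.inl ⟨huM, by rintro (h | h) <;> [exact hux h; exact hny h]⟩
        · exact Or.inr (Or.inl rfl)
    by_cases hyP : y ∈ edgeCover P
    · -- recurse
      obtain ⟨e', he'P, hye'⟩ := hyP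
      have he'ne : e' ≠ s(v, x) := by
        intro h
        subst h
        rcases Sym2.mem_iff.1 hye' with h | h
        · exact hyv h
        · exact hxy' h.symm
      have hyP' : y ∈ edgeCover (P.erase s(v, x)) :=
        ⟨e', Finset.mem_erase.2 ⟨he'ne, he'P⟩, hye'⟩
      have hyM' : y ∉ edgeCover M' := by
        rw [hcovM']
        rintro ⟨_, h⟩; exact h rfl
      have hPsub : P.erase s(v, x) ⊂ P := Finset.erase_ssubset heP
      have hS'M' : insert s(v, x) S ⊆ M' := by
        intro g hg
        rcases Finset.mem_insert.1 hg with rfl | hg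
        · exact Finset.mem_insert_self _ _
        · exact hSM' hg
      have hS'P : ∀ g ∈ insert s(v, x) S, ∀ u : V, u ∈ g → u ∉ edgeCover (P.erase s(v, x)) := by
        intro g hg u hu huP'
        obtain ⟨e'', he''P', hue''⟩ := huP'
        have he''P := Finset.mem_of_mem_erase he''P'
        have he''ne := Finset.ne_of_mem_erase he''P'
        rcases Finset.mem_insert.1 hg with rfl | hg
        · -- u ∈ s(v,x): u's unique P-edge is s(v,x)
          rcases Sym2.mem_iff.1 hu with rfl | rfl
          · exact he''ne (matching_edge_unique hP he''P heP hue'' (Sym2.mem_mk_left u x))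
          · exact he''ne (matching_edge_unique hP he''P heP hue'' (Sym2.mem_mk_right v u))
        · exact hSP g hg u hu ⟨e'', he''P, hue''⟩
      obtain ⟨M₂, b, hM₂max, hM₂card, hbM', hbP', hbM₂, hcovM₂, hS'M₂⟩ :=
        IH (P.erase s(v, x)) hPsub M' y (insert s(v, x) S) hM'max
          (matching_subset (Finset.erase_subset _ _) hP) hyM' hyP' hS'M' hS'P
      have hvxM₂ : s(v, x) ∈ M₂ := hS'M₂ (Finset.mem_insert_self _ _)
      have hbv : b ≠ v := fun h => hbM₂ ⟨_, hvxM₂, h ▸ Sym2.mem_mk_left v x⟩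
      have hbx : b ≠ x := fun h => hbM₂ ⟨_, hvxM₂, h ▸ Sym2.mem_mk_right v x⟩
      have hby : b ≠ y := by
        intro h
        rw [h] at hbM'
        exact hyM' hbM'
      refine ⟨M₂, b, hM₂max, by rw [hM₂card, hM'card], ?_, ?_, hbM₂, ?_, fun g hg => hS'M₂ (Finset.mem_insert_of_mem hg)⟩
      · -- b ∈ edgeCover M
        rw [hcovM'] at hbM'
        rcases hbM'.1 with h | h
        · exact h
        · exact absurd h hbv
      · -- b ∉ edgeCover P
        intro hbPc
        obtain ⟨g, hgP, hbg⟩ := hbPc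
        have hgne : g ≠ s(v, x) := by
          intro h
          subst h
          rcases Sym2.mem_iff.1 hbg with h | h
          · exact hbv h
          · exact hbx h
        exact hbP' ⟨g, Finset.mem_erase.2 ⟨hgne, hgP⟩, hbg⟩
      · -- cover equation
        rw [hcovM₂, hcovM']
        ext u
        simp only [Set.mem_diff, Set.mem_union, Set.mem_singleton_iff]
        constructor
        · rintro ⟨(⟨(h | rfl), hny⟩ | rfl), hnb⟩
          · exact ⟨Or.inl h, hnb⟩
          · exact ⟨Or.inr rfl, hnb⟩
          · exact ⟨Or.inl hyM, hnb⟩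
        · rintro ⟨(h | rfl), hnb⟩
          · by_cases huy : u = y
            · exact ⟨Or.inr huy, hnb⟩
            · exact ⟨Or.inl ⟨Or.inl h, huy⟩, hnb⟩
          · exact ⟨Or.inl ⟨Or.inr rfl, hyv.symm⟩, hnb⟩
    · -- base case : y ∉ edgeCover P, done with b := y
      exact ⟨M', y, hM'max, hM'card, hyM, hyP, by rw [hcovM']; rintro ⟨_, h⟩; exact h rfl,
        hcovM', hSM'⟩
section Expose

variable {G : SimpleGraph V}

/-- If `w` is covered by a maximum matching `M` and missed by a maximum matching `P`, then
there is a maximum matching missing `w` whose set of exposed vertices is otherwise that of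
`M` minus one vertex `b`. -/
lemma expose : ∀ (n : ℕ) (M P : Finset (Sym2 V)) (w : V), (M \ P).card ≤ n →
    IsMaximumMatchingSet G M → IsMaximumMatchingSet G P →
    w ∈ edgeCover M → w ∉ edgeCover P →
    ∃ (M₂ : Finset (Sym2 V)) (b : V), IsMaximumMatchingSet G M₂ ∧ M₂.card = M.card ∧
      b ∉ edgeCover M ∧ edgeCover M₂ = (edgeCover M \ {w}) ∪ {b} ∧
      (∀ h ∈ M, h ∈ P → h ∈ M₂) := by
  intro n
  induction n with
  | zero =>
    intro M P w hn hM hP hwM hwP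
    obtain ⟨f, hfM, hwf⟩ := hwM
    have hfP : f ∉ P := fun h => hwP ⟨f, h, hwf⟩
    have : f ∈ M \ P := Finset.mem_sdiff.2 ⟨hfM, hfP⟩
    have := Finset.card_pos.2 ⟨f, this⟩
    omega
  | succ n IHn =>
    intro M P w hn hM hP hwM hwP
    obtain ⟨f, hfM, hwf⟩ := hwM
    obtain ⟨z, rfl, hwz⟩ := exists_eq_pair (hM.1.1 f hfM) hwf
    have hzw : z ≠ w := hwz.ne'
    have hzM : z ∈ edgeCover M := ⟨_, hfM, Sym2.mem_mk_right w z⟩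
    have hwM : w ∈ edgeCover M := ⟨_, hfM, Sym2.mem_mk_left w z⟩
    have hzP : z ∈ edgeCover P := by
      by_contra hz
      exact not_adj_of_exposed hP hwP hz hwz
    obtain ⟨e, heP, hze⟩ := hzP
    obtain ⟨t, rfl, hzt⟩ := exists_eq_pair (hP.1.1 e heP) hze
    have htP : t ∈ edgeCover P := ⟨_, heP, Sym2.mem_mk_right z t⟩
    have htw : t ≠ w := fun h => hwP (h ▸ htP)
    have htz : t ≠ z := hzt.ne'
    have hfP : s(w, z) ∉ P := fun h => hwP ⟨_, h, Sym2.mem_mk_left w z⟩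
    have hef : s(z, t) ≠ s(w, z) := fun h => hfP (h ▸ heP)
    have heM : s(z, t) ∉ M := by
      intro h
      exact hef (matching_edge_unique hM.1 h hfM (Sym2.mem_mk_left z t) (Sym2.mem_mk_right w z))
    by_cases htM : t ∈ edgeCover M
    · -- recursive case
      -- swap on P : P' = insert s(w,z) (P.erase s(z,t))
      have hcovP : ∀ u : V, u ∈ s(w, z) → u ∈ edgeCover P → u ∈ s(z, t) := by
        intro u hu huP
        rcases Sym2.mem_iff.1 hu with h | h
        · rw [h] at huP; exact absurd huP hwP
        · rw [h]; exact Sym2.mem_mk_left z t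
      obtain ⟨hP'm, hP'card, hP'cov⟩ := swap_matching hP.1 heP (hwz : G.Adj w z) hfP hcovP
      set P' : Finset (Sym2 V) := insert s(w, z) (P.erase s(z, t)) with hP'def
      have hP'max : IsMaximumMatchingSet G P' := ⟨hP'm, fun N hN => hP'card ▸ hP.2 N hN⟩
      have hmeas : M \ P' = (M \ P).erase s(w, z) := by
        ext g
        constructor
        · intro hg
          obtain ⟨hgM, hgP'⟩ := Finset.mem_sdiff.1 hg
          refine Finset.mem_erase.2 ⟨fun h => hgP' (by rw [h]; exact Finset.mem_insert_self _ _),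
            Finset.mem_sdiff.2 ⟨hgM, fun hgP => ?_⟩⟩
          exact hgP' (Finset.mem_insert_of_mem (Finset.mem_erase.2
            ⟨fun h => heM (by rw [h] at hgM; exact hgM), hgP⟩))
        · intro hg
          obtain ⟨hgne, hgMP⟩ := Finset.mem_erase.1 hg
          obtain ⟨hgM, hgP⟩ := Finset.mem_sdiff.1 hgMP
          refine Finset.mem_sdiff.2 ⟨hgM, fun h => ?_⟩
          rcases Finset.mem_insert.1 h with h | h
          · exact hgne h
          · exact hgP (Finset.mem_of_mem_erase h)
      have hfMP : s(w, z) ∈ M \ P := Finset.mem_sdiff.2 ⟨hfM, hfP⟩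
      have hmeas' : (M \ P').card ≤ n := by
        rw [hmeas]
        have := Finset.card_erase_of_mem hfMP
        omega
      have htP' : t ∉ edgeCover P' := by
        rw [hP'cov]
        rintro (⟨_, h⟩ | h)
        · exact h (Sym2.mem_mk_right z t)
        · rcases Sym2.mem_iff.1 h with h | h
          · exact htw h
          · exact htz h
      obtain ⟨M₂, b, hM₂max, hM₂card, hbM, hcovM₂, hpres⟩ := IHn M P' t hmeas' hM hP'max htM htP'
      -- now swap f for e in M₂
      have hfM₂ : s(w, z) ∈ M₂ := hpres _ hfM (Finset.mem_insert_self _ _)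
      have heM₂ : s(z, t) ∉ M₂ := by
        intro h
        exact hef (matching_edge_unique hM₂max.1 h hfM₂
          (Sym2.mem_mk_left z t) (Sym2.mem_mk_right w z))
      have hbw : b ≠ w := fun h => hbM (h ▸ hwM)
      have hbz : b ≠ z := fun h => hbM (h ▸ hzM)
      have hbt : b ≠ t := fun h => hbM (h ▸ htM)
      have hcov₂ : ∀ u : V, u ∈ s(z, t) → u ∈ edgeCover M₂ → u ∈ s(w, z) := by
        intro u hu huM₂
        rcases Sym2.mem_iff.1 hu with h | h
        · rw [h]; exact Sym2.mem_mk_right w z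
        · rw [h] at huM₂
          rw [hcovM₂] at huM₂
          rcases huM₂ with ⟨_, h2⟩ | h2
          · exact absurd rfl h2
          · exact absurd h2.symm hbt
      obtain ⟨hm2, hcard2, hcov2'⟩ := swap_matching hM₂max.1 hfM₂ (hzt : G.Adj z t) heM₂ hcov₂
      refine ⟨insert s(z, t) (M₂.erase s(w, z)), b,
        ⟨hm2, fun N hN => (hcard2.trans hM₂card) ▸ hM.2 N hN⟩,
        hcard2.trans hM₂card, hbM, ?_, ?_⟩
      · rw [hcov2', hcovM₂]
        ext u
        simp only [Set.mem_union, Set.mem_diff, Set.mem_setOf_eq, Set.mem_singleton_iff,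
          Sym2.mem_iff]
        constructor
        · rintro (⟨(⟨huM, hut⟩ | rfl), hn2⟩ | (rfl | rfl))
          · exact Or.inl ⟨huM, fun h => hn2 (Or.inl h)⟩
          · exact Or.inr rfl
          · exact Or.inl ⟨hzM, hzw⟩
          · exact Or.inl ⟨htM, htw⟩
        · rintro (⟨huM, hnw⟩ | rfl)
          · by_cases huz : u = z
            · exact Or.inr (Or.inl huz)
            · by_cases hut : u = t
              · exact Or.inr (Or.inr hut)
              · exact Or.inl ⟨Or.inl ⟨huM, hut⟩, by rintro (h | h) <;> [exact hnw h; exact huz h]⟩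
          · exact Or.inl ⟨Or.inr rfl, by rintro (h | h) <;> [exact hbw h; exact hbz h]⟩
      · intro h hhM hhP
        have hh1 : h ≠ s(w, z) := fun hh => hfP (hh ▸ hhP)
        have hh2 : h ≠ s(z, t) := fun hh => heM (hh ▸ hhM)
        have : h ∈ P' := Finset.mem_insert_of_mem (Finset.mem_erase.2 ⟨hh2, hhP⟩)
        exact Finset.mem_insert_of_mem (Finset.mem_erase.2 ⟨hh1, hpres h hhM this⟩)
    · -- base case
      have hcov : ∀ u : V, u ∈ s(z, t) → u ∈ edgeCover M → u ∈ s(w, z) := by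
        intro u hu huM
        rcases Sym2.mem_iff.1 hu with h | h
        · rw [h]; exact Sym2.mem_mk_right w z
        · rw [h] at huM; exact absurd huM htM
      obtain ⟨hm, hcard, hcov'⟩ := swap_matching hM.1 hfM (hzt : G.Adj z t) heM hcov
      refine ⟨insert s(z, t) (M.erase s(w, z)), t, ⟨hm, fun N hN => hcard ▸ hM.2 N hN⟩,
        hcard, htM, ?_, ?_⟩
      · rw [hcov']
        ext u
        simp only [Set.mem_union, Set.mem_diff, Set.mem_setOf_eq, Set.mem_singleton_iff,
          Sym2.mem_iff]
        constructor
        · rintro (⟨huM, hn2⟩ | (rfl | rfl))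
          · exact Or.inl ⟨huM, fun h => hn2 (Or.inl h)⟩
          · exact Or.inl ⟨hzM, hzw⟩
          · exact Or.inr rfl
        · rintro (⟨huM, hnw⟩ | rfl)
          · by_cases huz : u = z
            · exact Or.inr (Or.inl huz)
            · exact Or.inl ⟨huM, by rintro (h | h) <;> [exact hnw h; exact huz h]⟩
          · exact Or.inr (Or.inr rfl)
      · intro h hhM hhP
        have hh1 : h ≠ s(w, z) := fun hh => hfP (hh ▸ hhP)
        exact Finset.mem_insert_of_mem (Finset.mem_erase.2 ⟨hh1, hhM⟩)

end Expose
section Gallai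

variable {G : SimpleGraph V}

lemma exposed_mem_Dset {M : Finset (Sym2 V)} (hM : IsMaximumMatchingSet G M)
    {v : V} (hv : v ∉ edgeCover M) : v ∈ Dset G := ⟨M, hM, hv⟩

lemma covered_of_not_mem_Dset {M : Finset (Sym2 V)} (hM : IsMaximumMatchingSet G M)
    {v : V} (hv : v ∉ Dset G) : v ∈ edgeCover M := by
  by_contra h
  exact hv ⟨M, hM, h⟩

/-- Gallai-type lemma: a maximum matching misses at most one vertex in each connected
component of `G[D(G)]`. -/
lemma no_two_exposed_aux (n : ℕ) : ∀ (M : Finset (Sym2 V)) (u u' : V),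
    IsMaximumMatchingSet G M → u ≠ u' → u ∉ edgeCover M → u' ∉ edgeCover M →
    ∀ p : (indOn G (Dset G)).Walk u u', p.length ≤ n → False := by
  induction n using Nat.strong_induction_on with
  | _ n IH =>
    intro M u u' hM hne hu hu' p hp
    cases p with
    | nil => exact hne rfl
    | @cons _ w1 _ h q =>
      have hadj : G.Adj u w1 := h.2.2
      by_cases hw1u' : w1 = u'
      · subst hw1u'
        exact not_adj_of_exposed hM hu hu' hadj
      · rw [SimpleGraph.Walk.length_cons] at hp
        have hqlen : q.length ≠ 0 := fun h0 => hw1u' (q.eq_of_length_eq_zero h0)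
        have hqn : q.length < n := by omega
        have h1n : 1 < n := by omega
        have hw1u : w1 ≠ u := hadj.ne'
        by_cases hw1M : w1 ∈ edgeCover M
        · obtain ⟨M'', hM'', hw1M''⟩ := h.2.1
          by_cases huM'' : u ∈ edgeCover M''
          · by_cases hu'M'' : u' ∈ edgeCover M''
            · obtain ⟨M₂, b, hM₂, hcard, hbM, hcov₂, -⟩ :=
                expose (G := G) (M \ M'').card M M'' w1 le_rfl hM hM'' hw1M hw1M''
            -- w1 is exposed by M₂
              have hw1M₂ : w1 ∉ edgeCover M₂ := by
                rw [hcov₂]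
                rintro (⟨_, hh⟩ | hh)
                · exact hh rfl
                · exact hbM (hh ▸ hw1M)
              by_cases hbu : b = u
              · have hu'M₂ : u' ∉ edgeCover M₂ := by
                  rw [hcov₂]
                  rintro (⟨hh, _⟩ | hh)
                  · exact hu' hh
                  · exact hne (hbu ▸ hh).symm
                exact IH q.length hqn M₂ w1 u' hM₂ hw1u' hw1M₂ hu'M₂ q le_rfl
              · have huM₂ : u ∉ edgeCover M₂ := by
                  rw [hcov₂]
                  rintro (⟨hh, _⟩ | hh)
                  · exact hu hh
                  · exact hbu hh.symm
                exact IH 1 h1n M₂ w1 u hM₂ hw1u hw1M₂ huM₂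
                  (SimpleGraph.Walk.cons h.symm SimpleGraph.Walk.nil) (by simp)
            · exact IH q.length hqn M'' w1 u' hM'' hw1u' hw1M'' hu'M'' q le_rfl
          · exact IH 1 h1n M'' w1 u hM'' hw1u hw1M'' huM''
              (SimpleGraph.Walk.cons h.symm SimpleGraph.Walk.nil) (by simp)
        · exact IH q.length hqn M w1 u' hM hw1u' hw1M hu' q le_rfl

/-- Two distinct vertices exposed by a maximum matching are not connected in `G[D(G)]`. -/
lemma not_reachable_of_exposed {M : Finset (Sym2 V)} (hM : IsMaximumMatchingSet G M)
    {u u' : V} (hne : u ≠ u') (hu : u ∉ edgeCover M) (hu' : u' ∉ edgeCover M)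
    (hr : (indOn G (Dset G)).Reachable u u') : False := by
  obtain ⟨p⟩ := hr
  exact no_two_exposed_aux p.length M u u' hM hne hu hu' p le_rfl

end Gallai
section Structure

variable {G : SimpleGraph V}

lemma matching_mono {H : SimpleGraph V} (hle : ∀ a b, H.Adj a b → G.Adj a b)
    {M : Finset (Sym2 V)} (hM : IsMatchingSet H M) : IsMatchingSet G M := by
  refine ⟨fun e he => ?_, hM.2⟩
  have := hM.1 e he
  induction e using Sym2.ind with
  | _ a b => exact hle a b this

lemma matching_of_gstar {M : Finset (Sym2 V)} (hM : IsMatchingSet (Gstar G) M) :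
    IsMatchingSet G M := matching_mono (H := Gstar G) (fun _ _ h => h.1) hM

lemma matching_of_indOn {s : Set V} {M : Finset (Sym2 V)}
    (hM : IsMatchingSet (indOn G s) M) : IsMatchingSet G M :=
  matching_mono (H := indOn G s) (fun _ _ h => h.2.2) hM

lemma neighbor_of_Dstar {v x : V} (hv : v ∈ DstarSet G) (hadj : G.Adj v x) :
    x ∈ Aset G := by
  have hxD : x ∉ Dset G := fun hx => hv.2 x ⟨hv.1, hx, hadj⟩
  exact ⟨hxD, v, hv.1, hadj⟩

lemma gstar_cover_sub {M : Finset (Sym2 V)} (hM : IsMatchingSet (Gstar G) M) :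
    edgeCover M ⊆ Aset G ∪ DstarSet G := by
  rintro v ⟨e, he, hv⟩
  obtain ⟨x, rfl, hadj⟩ := exists_eq_pair (hM.1 e he) hv
  rcases hadj.2 with ⟨h1, _⟩ | ⟨h1, _⟩
  · exact Or.inl h1
  · exact Or.inr h1

lemma cover_biUnion {ι : Type*} [DecidableEq ι] {s : Finset ι} {f : ι → Finset (Sym2 V)}
    {v : V} : v ∈ edgeCover (s.biUnion f) ↔ ∃ i ∈ s, v ∈ edgeCover (f i) := by
  constructor
  · rintro ⟨e, he, hv⟩
    obtain ⟨i, hi, hei⟩ := Finset.mem_biUnion.1 he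
    exact ⟨i, hi, e, hei, hv⟩
  · rintro ⟨i, hi, e, he, hv⟩
    exact ⟨e, Finset.mem_biUnion.2 ⟨i, hi, he⟩, hv⟩

open Classical in
/-- Iterated alternating exchanges: there is a maximum matching covering the cover of any
fixed matching `P`. -/
lemma cover_improve {P : Finset (Sym2 V)} (hP : IsMatchingSet G P) :
    ∀ (m : ℕ) (M : Finset (Sym2 V)), IsMaximumMatchingSet G M →
    (Finset.univ.filter fun v => v ∈ edgeCover P ∧ v ∉ edgeCover M).card ≤ m →
    ∃ M₂, IsMaximumMatchingSet G M₂ ∧ edgeCover P ⊆ edgeCover M₂ := by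
  intro m
  induction m with
  | zero =>
    intro M hM hcard
    refine ⟨M, hM, fun v hv => ?_⟩
    by_contra hvM
    have : v ∈ Finset.univ.filter fun v => v ∈ edgeCover P ∧ v ∉ edgeCover M := by
      simp [hv, hvM]
    have := Finset.card_pos.2 ⟨v, this⟩
    omega
  | succ m IHm =>
    intro M hM hcard
    by_cases hsub : edgeCover P ⊆ edgeCover M
    · exact ⟨M, hM, hsub⟩
    · obtain ⟨v, hvP, hvM⟩ := Set.not_subset.1 hsub
      obtain ⟨M₂, b, hM₂, hcard₂, hbM, hbP, hbM₂, hcov₂, -⟩ :=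
        flipA (G := G) P M v ∅ hM hP hvM hvP (Finset.empty_subset _) (by simp)
      refine IHm M₂ hM₂ ?_
      have hsub2 : (Finset.univ.filter fun u => u ∈ edgeCover P ∧ u ∉ edgeCover M₂) ⊆
          (Finset.univ.filter fun u => u ∈ edgeCover P ∧ u ∉ edgeCover M).erase v := by
        intro u hu
        rw [Finset.mem_filter] at hu
        obtain ⟨-, huP, huM₂⟩ := hu
        have hub : u ≠ b := fun h => hbP (h ▸ huP)
        rw [hcov₂] at huM₂
        have : u ∉ edgeCover M ∪ {v} := fun h => huM₂ ⟨h, hub⟩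
        refine Finset.mem_erase.2 ⟨fun h => this (Or.inr h), ?_⟩
        simp only [Finset.mem_filter, Finset.mem_univ, true_and]
        exact ⟨huP, fun h => this (Or.inl h)⟩
      have hvmem : v ∈ Finset.univ.filter fun u => u ∈ edgeCover P ∧ u ∉ edgeCover M := by
        simp [hvP, hvM]
      have := Finset.card_le_card hsub2
      have := Finset.card_erase_of_mem hvmem
      omega

end Structure
/-- If `A(G) ≠ ∅`, `md(G*) = k ≥ 2` and `N₁ ∪ ⋯ ∪ N_k` is an optimal matching
`D*`-cover of `G*`, then `G` has an optimal matching cover `M₁ ∪ ⋯ ∪ M_k` such that `M₁` is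
a maximum matching of `G` with `V(N₁) ⊆ V(M₁)`, `M₂` is the union of `N₂` and a matching of
`G[D(G)]`, and `M_i = N_i` for `3 ≤ i ≤ k`. -/
theorem optimal_cover_of_two_le_md (G : SimpleGraph V) (hconn : G.Connected)
    (hA : (Aset G).Nonempty) (k : ℕ) (hk : 2 ≤ k)
    (hmd : md (Gstar G) (DstarSet G) = k)
    (N : Fin k → Finset (Sym2 V)) (hN : ∀ i, IsMatchingSet (Gstar G) (N i))
    (hNcov : ∀ v ∈ DstarSet G, v ∈ edgeCover (Finset.univ.biUnion N)) :
    ∃ M : Fin k → Finset (Sym2 V),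
      (∀ i, IsMatchingSet G (M i)) ∧
      (∀ v : V, v ∈ edgeCover (Finset.univ.biUnion M)) ∧
      mc G = k ∧
      IsMaximumMatchingSet G (M ⟨0, by omega⟩) ∧
      edgeCover (N ⟨0, by omega⟩) ⊆ edgeCover (M ⟨0, by omega⟩) ∧
      (∃ N' : Finset (Sym2 V), IsMatchingSet (indOn G (Dset G)) N' ∧
        M ⟨1, by omega⟩ = N ⟨1, by omega⟩ ∪ N') ∧
      (∀ i : Fin k, 2 ≤ (i : ℕ) → M i = N i) := by
  classical
  have hNG : ∀ i, IsMatchingSet G (N i) := fun i => matching_of_gstar (hN i)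
  obtain ⟨Minit, hMinit⟩ := exists_maximum_matching G
  obtain ⟨M₀, hM₀, hM₀cov⟩ := cover_improve (hNG ⟨0, by omega⟩) _ Minit hMinit le_rfl
  -- the exposed vertices of `M₀` lying in nontrivial components of `G[D]`
  set U : Finset V := Finset.univ.filter
    (fun u => u ∉ edgeCover M₀ ∧ u ∈ Dset G ∧ u ∉ DstarSet G) with hUdef
  have hUmem : ∀ u, u ∈ U ↔ u ∉ edgeCover M₀ ∧ u ∈ Dset G ∧ u ∉ DstarSet G := by
    intro u; simp [hUdef]
  have hex : ∀ u : V, ∃ x, u ∈ U → (indOn G (Dset G)).Adj u x := by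
    intro u
    by_cases hu : u ∈ U
    · obtain ⟨h1, h2, h3⟩ := (hUmem u).1 hu
      have : ∃ x, (indOn G (Dset G)).Adj u x := by
        by_contra hno
        push_neg at hno
        exact h3 ⟨h2, hno⟩
      exact this.imp fun x hx => fun _ => hx
    · exact ⟨u, fun h => absurd h hu⟩
  choose pk hpk using hex
  set N' : Finset (Sym2 V) := U.image (fun u => s(u, pk u)) with hN'def
  have hN'mem : ∀ e ∈ N', ∃ u ∈ U, e = s(u, pk u) := by
    intro e he
    obtain ⟨u, hu, hue⟩ := Finset.mem_image.1 he
    exact ⟨u, hu, hue.symm⟩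
  have hN'loc : ∀ e ∈ N', ∀ v : V, v ∈ e → v ∈ Dset G ∧ v ∉ DstarSet G := by
    intro e he v hv
    obtain ⟨u, hu, rfl⟩ := hN'mem e he
    obtain ⟨h1, h2, h3⟩ := (hUmem u).1 hu
    have hadj := hpk u hu
    rcases Sym2.mem_iff.1 hv with h | h
    · rw [h]; exact ⟨h2, h3⟩
    · rw [h]; exact ⟨hadj.2.1, fun hD => hD.2 u hadj.symm⟩
  have hUnr : ∀ u ∈ U, ∀ u2 ∈ U, u ≠ u2 → ¬ (indOn G (Dset G)).Reachable u u2 :=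
    fun u hu u2 hu2 hne hr => not_reachable_of_exposed hM₀ hne
      ((hUmem u).1 hu).1 ((hUmem u2).1 hu2).1 hr
  have hN'match : IsMatchingSet (indOn G (Dset G)) N' := by
    constructor
    · intro e he
      obtain ⟨u, hu, rfl⟩ := hN'mem e he
      exact (indOn G (Dset G)).mem_edgeSet.2 (hpk u hu)
    · intro e he f hf hef v hv hv'
      obtain ⟨u, hu, rfl⟩ := hN'mem e he
      obtain ⟨u2, hu2, rfl⟩ := hN'mem f hf
      have hneu : u ≠ u2 := fun h => hef (by rw [h])
      have hadj1 := hpk u hu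
      have hadj2 := hpk u2 hu2
      have hreach : (indOn G (Dset G)).Reachable u u2 := by
        rcases Sym2.mem_iff.1 hv with h1 | h1 <;> rcases Sym2.mem_iff.1 hv' with h2 | h2
        · exact absurd (h1.symm.trans h2) hneu
        · have : (indOn G (Dset G)).Adj u2 u := by
            rw [h1.symm.trans h2]; exact hadj2
          exact this.symm.reachable
        · have : (indOn G (Dset G)).Adj u u2 := by
            rw [← (h1.symm.trans h2)]; exact hadj1
          exact this.reachable
        · exact hadj1.reachable.trans
            (by rw [h1.symm.trans h2]; exact hadj2.symm.reachable)
      exact hUnr u hu u2 hu2 hneu hreach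
  have hM1match : IsMatchingSet G (N ⟨1, by omega⟩ ∪ N') := by
    have hg := hNG ⟨1, by omega⟩
    have hind := matching_of_indOn hN'match
    constructor
    · intro e he
      rcases Finset.mem_union.1 he with h | h
      · exact hg.1 e h
      · exact hind.1 e h
    · intro e he f hf hef v hv hv'
      rcases Finset.mem_union.1 he with he1 | he2 <;> rcases Finset.mem_union.1 hf with hf1 | hf2
      · exact hg.2 e he1 f hf1 hef v hv hv'
      · have hva := gstar_cover_sub (hN ⟨1, by omega⟩) ⟨e, he1, hv⟩
        have hvd := hN'loc f hf2 v hv'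
        rcases hva with h | h
        · exact h.1 hvd.1
        · exact hvd.2 h
      · have hva := gstar_cover_sub (hN ⟨1, by omega⟩) ⟨f, hf1, hv'⟩
        have hvd := hN'loc e he2 v hv
        rcases hva with h | h
        · exact h.1 hvd.1
        · exact hvd.2 h
      · exact hind.2 e he2 f hf2 hef v hv hv'
  -- the cover
  set Mf : Fin k → Finset (Sym2 V) := fun i =>
    if (i : ℕ) = 0 then M₀ else if (i : ℕ) = 1 then N ⟨1, by omega⟩ ∪ N' else N i with hMfdef
  have h0 : Mf ⟨0, by omega⟩ = M₀ := by simp [hMfdef]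
  have h1 : Mf ⟨1, by omega⟩ = N ⟨1, by omega⟩ ∪ N' := by simp [hMfdef]
  have h2 : ∀ i : Fin k, 2 ≤ (i : ℕ) → Mf i = N i := by
    intro i hi
    simp only [hMfdef]
    rw [if_neg (by omega), if_neg (by omega)]
  have hMfmatch : ∀ i, IsMatchingSet G (Mf i) := by
    intro i
    by_cases hi0 : (i : ℕ) = 0
    · have hie : i = ⟨0, by omega⟩ := Fin.ext hi0
      rw [hie, h0]; exact hM₀.1
    · by_cases hi1 : (i : ℕ) = 1
      · have hie : i = ⟨1, by omega⟩ := Fin.ext hi1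
        rw [hie, h1]; exact hM1match
      · rw [h2 i (by omega)]; exact hNG i
  have hNsubM : ∀ i, edgeCover (N i) ⊆ edgeCover (Mf i) := by
    intro i
    by_cases hi0 : (i : ℕ) = 0
    · have hie : i = ⟨0, by omega⟩ := Fin.ext hi0
      rw [hie, h0]; exact hM₀cov
    · by_cases hi1 : (i : ℕ) = 1
      · have hie : i = ⟨1, by omega⟩ := Fin.ext hi1
        rw [hie, h1]; exact edgeCover_mono Finset.subset_union_left
      · rw [h2 i (by omega)]
  have hcoverall : ∀ v : V, v ∈ edgeCover (Finset.univ.biUnion Mf) := by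
    intro v
    rw [cover_biUnion]
    by_cases hvD : v ∈ Dset G
    · by_cases hvD' : v ∈ DstarSet G
      · have hvc := hNcov v hvD'
        rw [cover_biUnion] at hvc
        obtain ⟨i, -, hvi⟩ := hvc
        exact ⟨i, Finset.mem_univ i, hNsubM i hvi⟩
      · by_cases hvM₀ : v ∈ edgeCover M₀
        · exact ⟨⟨0, by omega⟩, Finset.mem_univ _, by rw [h0]; exact hvM₀⟩
        · have hvU : v ∈ U := (hUmem v).2 ⟨hvM₀, hvD, hvD'⟩
          refine ⟨⟨1, by omega⟩, Finset.mem_univ _, ?_⟩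
          rw [h1]
          exact ⟨s(v, pk v), Finset.mem_union_right _
            (by rw [hN'def]; exact Finset.mem_image_of_mem _ hvU), Sym2.mem_mk_left _ _⟩
    · exact ⟨⟨0, by omega⟩, Finset.mem_univ _,
        by rw [h0]; exact covered_of_not_mem_Dset hM₀ hvD⟩
  have hkcov : IsKMatchingCover G k (Finset.univ.biUnion Mf) := ⟨⟨Mf, hMfmatch, rfl⟩, hcoverall⟩
  have hlower : ∀ j ∈ {j | ∃ Mj : Finset (Sym2 V), IsKMatchingCover G j Mj}, k ≤ j := by
    rintro j ⟨Mj, ⟨f, hf, rfl⟩, hcov⟩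
    have hmem : ∃ M' : Finset (Sym2 V), IsKMatchingDCover (Gstar G) (DstarSet G) j M' := by
      refine ⟨Finset.univ.biUnion (fun i => (f i).filter (· ∈ (Gstar G).edgeSet)),
        ⟨fun i => (f i).filter (· ∈ (Gstar G).edgeSet), fun i => ⟨?_, ?_⟩, rfl⟩, ?_⟩
      · intro e he; exact (Finset.mem_filter.1 he).2
      · intro e he f' hf' hef v hv hv'
        exact (hf i).2 e (Finset.filter_subset _ _ he) f' (Finset.filter_subset _ _ hf')
          hef v hv hv'
      · intro v hvD'
        have hvc := hcov v
        rw [cover_biUnion] at hvc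
        obtain ⟨i, -, e, hei, hve⟩ := hvc
        obtain ⟨x, rfl, hadj⟩ := exists_eq_pair ((hf i).1 e hei) hve
        have hxA := neighbor_of_Dstar hvD' hadj
        have hgs : s(v, x) ∈ (Gstar G).edgeSet :=
          (Gstar G).mem_edgeSet.2 ⟨hadj, Or.inr ⟨hvD', hxA⟩⟩
        rw [cover_biUnion]
        exact ⟨i, Finset.mem_univ _, s(v, x), Finset.mem_filter.2 ⟨hei, hgs⟩,
          Sym2.mem_mk_left _ _⟩
    have hle : md (Gstar G) (DstarSet G) ≤ j := Nat.sInf_le hmem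
    omega
  have hmc : mc G = k := by
    refine le_antisymm (Nat.sInf_le ⟨_, hkcov⟩) (le_csInf ⟨k, _, hkcov⟩ hlower)
  exact ⟨Mf, hMfmatch, hcoverall, hmc, by rw [h0]; exact hM₀, by rw [h0]; exact hM₀cov,
    ⟨N', hN'match, h1⟩, h2⟩
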